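/- Let p, q : ℝ → ℝ satisfy the Hamilton equations p' = -(b p^2 + 2c p q + d q^2), q' = a p^2 + 2b p q + c q^2, and let F = (b^2 - ac) p^2 + (bc - ad) p q + (c^2 - bd) q^2 along the curve. Then F satisfies the second-order equation F'' = 6 F^2 along the curve. -/

import Mathlib

/-!
The flow is Hamiltonian for the binary cubic `H = a p³ + 3b p² q + 3c p q² + d q³` (with
`p' = -∂H/∂q / 3`, `q' = ∂H/∂p / 3`), and `F = -Hess(H) / 36`. Differentiating a covariant along
the flow produces its Jacobian with `H`: the derivative of the Hessian is the cubic covariant of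
`H`, and the derivative of the cubic covariant is `6 F²`, the classical syzygy between these
covariants. Both steps are the chain rule followed by a polynomial identity.
-/

def binaryQuadratic (α β γ x y : ℝ) : ℝ := α * x ^ 2 + β * x * y + γ * y ^ 2

def binaryCubic (α β γ δ x y : ℝ) : ℝ :=
  α * x ^ 3 + 3 * β * x ^ 2 * y + 3 * γ * x * y ^ 2 + δ * y ^ 3

section ChainRule

variable {p q : ℝ → ℝ} {p' q' t : ℝ}

theorem HasDerivAt.binaryQuadratic (α β γ : ℝ) (hp : HasDerivAt p p' t) (hq : HasDerivAt q q' t) :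
    HasDerivAt (fun t => binaryQuadratic α β γ (p t) (q t))
      ((2 * α * p t + β * q t) * p' + (β * p t + 2 * γ * q t) * q') t := by
  have h := (((hp.fun_pow 2).const_mul α).fun_add ((hp.const_mul β).fun_mul hq)).fun_add
    ((hq.fun_pow 2).const_mul γ)
  exact h.congr_deriv (by push_cast; ring)

theorem HasDerivAt.binaryCubic (α β γ δ : ℝ) (hp : HasDerivAt p p' t) (hq : HasDerivAt q q' t) :
    HasDerivAt (fun t => binaryCubic α β γ δ (p t) (q t))
      (3 * (α * p t ^ 2 + 2 * β * p t * q t + γ * q t ^ 2) * p'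
        + 3 * (β * p t ^ 2 + 2 * γ * p t * q t + δ * q t ^ 2) * q') t := by
  have h := ((((hp.fun_pow 3).const_mul α).fun_add
    (((hp.fun_pow 2).const_mul (3 * β)).fun_mul hq)).fun_add
    ((hp.const_mul (3 * γ)).fun_mul (hq.fun_pow 2))).fun_add ((hq.fun_pow 3).const_mul δ)
  exact h.congr_deriv (by push_cast; ring)

end ChainRule

def cubicHessian (a b c d : ℝ) : ℝ → ℝ → ℝ :=
  binaryQuadratic (b ^ 2 - a * c) (b * c - a * d) (c ^ 2 - b * d)

def cubicCovariant (a b c d : ℝ) : ℝ → ℝ → ℝ :=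
  binaryCubic (-2 * b ^ 3 + 3 * a * b * c - a ^ 2 * d) (2 * a * c ^ 2 - b ^ 2 * c - a * b * d)
    (b * c ^ 2 + a * c * d - 2 * b ^ 2 * d) (2 * c ^ 3 - 3 * b * c * d + a * d ^ 2)

section Hamilton

variable {a b c d : ℝ} {p q : ℝ → ℝ} {t : ℝ}

theorem hasDerivAt_cubicHessian_of_hamilton
    (hp : HasDerivAt p (-(b * p t ^ 2 + 2 * c * p t * q t + d * q t ^ 2)) t)
    (hq : HasDerivAt q (a * p t ^ 2 + 2 * b * p t * q t + c * q t ^ 2) t) :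
    HasDerivAt (fun t => cubicHessian a b c d (p t) (q t)) (cubicCovariant a b c d (p t) (q t)) t :=
  (hp.binaryQuadratic _ _ _ hq).congr_deriv <| by
    simp only [cubicCovariant, binaryCubic]
    ring

theorem hasDerivAt_cubicCovariant_of_hamilton
    (hp : HasDerivAt p (-(b * p t ^ 2 + 2 * c * p t * q t + d * q t ^ 2)) t)
    (hq : HasDerivAt q (a * p t ^ 2 + 2 * b * p t * q t + c * q t ^ 2) t) :
    HasDerivAt (fun t => cubicCovariant a b c d (p t) (q t))
      (6 * cubicHessian a b c d (p t) (q t) ^ 2) t :=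
  (hp.binaryCubic _ _ _ _ hq).congr_deriv <| by
    simp only [cubicHessian, binaryQuadratic]
    ring

end Hamilton

theorem cubic_F_second_order_general (a b c d : ℝ) (p q : ℝ → ℝ)
    (hp1 : Differentiable ℝ p) (hq1 : Differentiable ℝ q)
    (hp : ∀ t, deriv p t = -(b*(p t)^2 + 2*c*(p t)*(q t) + d*(q t)^2))
    (hq : ∀ t, deriv q t = a*(p t)^2 + 2*b*(p t)*(q t) + c*(q t)^2) :
    ∀ t, deriv (deriv (fun t =>
        (b^2 - a*c)*(p t)^2 + (b*c - a*d)*(p t)*(q t) + (c^2 - b*d)*(q t)^2)) t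
      = 6 * ((b^2 - a*c)*(p t)^2 + (b*c - a*d)*(p t)*(q t) + (c^2 - b*d)*(q t)^2)^2 := by
  have hP : ∀ t, HasDerivAt p (-(b * p t ^ 2 + 2 * c * p t * q t + d * q t ^ 2)) t :=
    fun t => hp t ▸ (hp1 t).hasDerivAt
  have hQ : ∀ t, HasDerivAt q (a * p t ^ 2 + 2 * b * p t * q t + c * q t ^ 2) t :=
    fun t => hq t ▸ (hq1 t).hasDerivAt
  have hF : deriv (fun t => cubicHessian a b c d (p t) (q t))
      = fun t => cubicCovariant a b c d (p t) (q t) :=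
    funext fun t => (hasDerivAt_cubicHessian_of_hamilton (hP t) (hQ t)).deriv
  intro t
  exact (congrArg (deriv · t) hF).trans
    (hasDerivAt_cubicCovariant_of_hamilton (hP t) (hQ t)).deriv

theorem cubic_F_second_order (a b c d : ℝ) (p q : ℝ → ℝ)
    (hp1 : Differentiable ℝ p) (hq1 : Differentiable ℝ q)
    (hp2 : Differentiable ℝ (deriv p)) (hq2 : Differentiable ℝ (deriv q))
    (hp : ∀ t, deriv p t = -(b*(p t)^2 + 2*c*(p t)*(q t) + d*(q t)^2))
    (hq : ∀ t, deriv q t = a*(p t)^2 + 2*b*(p t)*(q t) + c*(q t)^2) :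
    ∀ t, deriv (deriv (fun t =>
        (b^2 - a*c)*(p t)^2 + (b*c - a*d)*(p t)*(q t) + (c^2 - b*d)*(q t)^2)) t
      = 6 * ((b^2 - a*c)*(p t)^2 + (b*c - a*d)*(p t)*(q t) + (c^2 - b*d)*(q t)^2)^2 :=
  cubic_F_second_order_general a b c d p q hp1 hq1 hp hq
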